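/- arXiv:2402.02631 — 2 statements merged into one kernel-verified Lean document; each statement's English description precedes it below -/
import Mathlib

section
/- Singleton identification with D = I: if F(k*) ≠ 0 is the unique nonzero Möbius coefficient in the aliasing set for bin j, and for each p ∈ [n] we set y_p = 1 − U_{e_p}(j)/U_0(j) where U_d(j) = ∑_{k ≤ ¬d, Hk = j} F(k) and e_p is the p-th standard unit vector, then y_p = k*_p for every p; hence the vector y exactly recovers k*. -/
open Finset

/-- Boolean matrix-vector product with AND as multiplication and OR as addition. -/
def bmul {b n : ℕ} (H : Fin b → Fin n → Bool) (k : Fin n → Bool) : Fin b → Bool :=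
  fun i => decide (∃ j, H i j = true ∧ k j = true)

/-- Delayed aliased coefficient: `U_d(j) = ∑_{k ≤ ¬d, Hk = j} F(k)`. -/
noncomputable def Ud {b n : ℕ} (H : Fin b → Fin n → Bool) (F : (Fin n → Bool) → ℝ)
    (j : Fin b → Bool) (d : Fin n → Bool) : ℝ :=
  ∑ k ∈ univ.filter (fun k : Fin n → Bool => (∀ i, k i ≤ !(d i)) ∧ bmul H k = j), F k

/-- Singleton identification with `D = I`: the statistics
`y_p = 1 - U_{e_p}(j)/U_0(j)` exactly recover `k*`. -/
theorem singleton_identification (b n : ℕ) (H : Fin b → Fin n → Bool)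
    (F : (Fin n → Bool) → ℝ) (j : Fin b → Bool) (kstar : Fin n → Bool)
    (hk : bmul H kstar = j) (hF : F kstar ≠ 0)
    (huniq : ∀ k', bmul H k' = j → k' ≠ kstar → F k' = 0) :
    ∀ p : Fin n,
      1 - Ud H F j (fun i => decide (i = p)) / Ud H F j (fun _ => false)
        = if kstar p = true then 1 else 0 := by
  intro p
  have hU0 : Ud H F j (fun _ => false) = F kstar := by
    unfold Ud
    rw [Finset.sum_eq_single kstar]
    · intro k hkmem hne
      simp only [mem_filter] at hkmem
      exact huniq k hkmem.2.2 hne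
    · intro h
      exact absurd (by simp [hk]) h
  have hUp : Ud H F j (fun i => decide (i = p))
      = if kstar p = true then 0 else F kstar := by
    unfold Ud
    by_cases hp : kstar p = true
    · rw [if_pos hp]
      apply Finset.sum_eq_zero
      intro k hkmem
      simp only [mem_filter] at hkmem
      refine huniq k hkmem.2.2 ?_
      intro he
      have := hkmem.2.1 p
      rw [he, hp] at this; simp only [decide_eq_true_eq] at this; exact absurd this (by decide)
    · rw [if_neg hp]
      rw [Finset.sum_eq_single kstar]
      · intro k hkmem hne
        simp only [mem_filter] at hkmem
        exact huniq k hkmem.2.2 hne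
      · intro h
        refine absurd ?_ h
        simp only [mem_filter, mem_univ, true_and]
        refine ⟨?_, hk⟩
        intro i
        by_cases hi : i = p
        · subst hi; simp [hp, Bool.le_iff_imp]
        · simp [hi]
  rw [hU0, hUp]
  by_cases hp : kstar p = true <;> simp [hp, hF]
end

section
/- Multiton detection for two collisions: suppose exactly two distinct vectors k1 ≠ k2 in {0,1}^n have nonzero Möbius coefficients F(k1), F(k2) with F(k1) + F(k2) ≠ 0, both mapping to the same bin j under H. With delays d = e_p for p = 1, …, n, define y_p = 1 − U_{e_p}(j)/U_0(j) where U_d(j) = ∑_{k ≤ ¬d, Hk = j} F(k). Then there exists some p such that y_p ∉ {0, 1}, provided F(k1) ≠ −F(k2), F(k1) ≠ 0 and F(k2) ≠ 0. -/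
open Finset

lemma U0_eq (b n : ℕ) (H : Fin b → Fin n → Bool) (F : (Fin n → Bool) → ℝ)
    (j : Fin b → Bool) (k1 k2 : Fin n → Bool)
    (hne : k1 ≠ k2) (h1 : bmul H k1 = j) (h2 : bmul H k2 = j)
    (hothers : ∀ k', bmul H k' = j → k' ≠ k1 → k' ≠ k2 → F k' = 0) :
    Ud H F j (fun _ => false) = F k1 + F k2 := by
  unfold Ud
  refine Finset.sum_eq_add _ _ hne ?_ ?_ ?_
  · intro c hc hc12
    simp only [Finset.mem_filter] at hc
    exact hothers c hc.2.2 hc12.1 hc12.2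
  · simp [h1]
  · simp [h2]

lemma Up_eq (b n : ℕ) (H : Fin b → Fin n → Bool) (F : (Fin n → Bool) → ℝ)
    (j : Fin b → Bool) (k1 k2 : Fin n → Bool) (p : Fin n)
    (hne : k1 ≠ k2) (h1 : bmul H k1 = j) (h2 : bmul H k2 = j)
    (hp1 : k1 p = true) (hp2 : k2 p = false)
    (hothers : ∀ k', bmul H k' = j → k' ≠ k1 → k' ≠ k2 → F k' = 0) :
    Ud H F j (fun i => decide (i = p)) = F k2 := by
  unfold Ud
  apply Finset.sum_eq_single
  · intro c hc hc2
    simp only [Finset.mem_filter] at hc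
    rcases eq_or_ne c k1 with rfl | hc1
    · have := hc.2.1 p
      rw [hp1] at this
      simp only [decide_eq_true_eq] at this
      exact absurd this (by simp)
    · exact hothers c hc.2.2 hc1 hc2
  · intro h
    exfalso
    apply h
    simp only [Finset.mem_filter, Finset.mem_univ, true_and]
    refine ⟨fun i => ?_, h2⟩
    rcases eq_or_ne i p with rfl | hip
    · simp [hp2]
    · simp [hip]

lemma key (F1 F2 : ℝ) (hF1 : F1 ≠ 0) (hF2 : F2 ≠ 0) (hsum : F1 + F2 ≠ 0) :
    (1 - F2 / (F1 + F2)) ≠ 0 ∧ (1 - F2 / (F1 + F2)) ≠ 1 := by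
  constructor
  · rw [sub_ne_zero]
    intro h
    apply hF1
    field_simp at h
    linarith
  · intro h
    apply hF2
    have : F2 / (F1 + F2) = 0 := by linarith
    rcases div_eq_zero_iff.mp this with h | h
    · exact h
    · exact absurd h hsum

/-- Multiton detection for two collisions: with exactly two nonzero coefficients
colliding in bin `j`, some statistic `y_p` lies outside `{0,1}`. -/
theorem multiton_detection (b n : ℕ) (H : Fin b → Fin n → Bool)
    (F : (Fin n → Bool) → ℝ) (j : Fin b → Bool) (k1 k2 : Fin n → Bool)
    (hne : k1 ≠ k2) (h1 : bmul H k1 = j) (h2 : bmul H k2 = j)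
    (hF1 : F k1 ≠ 0) (hF2 : F k2 ≠ 0) (hsum : F k1 + F k2 ≠ 0)
    (hothers : ∀ k', bmul H k' = j → k' ≠ k1 → k' ≠ k2 → F k' = 0) :
    ∃ p : Fin n,
      (1 - Ud H F j (fun i => decide (i = p)) / Ud H F j (fun _ => false)) ≠ 0 ∧
      (1 - Ud H F j (fun i => decide (i = p)) / Ud H F j (fun _ => false)) ≠ 1 := by
  obtain ⟨p, hp⟩ := Function.ne_iff.mp hne
  refine ⟨p, ?_⟩
  rw [U0_eq b n H F j k1 k2 hne h1 h2 hothers]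
  cases hb1 : k1 p
  · have hb2 : k2 p = true := by
      cases hb : k2 p
      · exact absurd (hb1.trans hb.symm) hp
      · rfl
    rw [Up_eq b n H F j k2 k1 p hne.symm h2 h1 hb2 hb1
      (fun k' hj ha hb => hothers k' hj hb ha)]
    rw [add_comm]
    exact key (F k2) (F k1) hF2 hF1 (fun h => hsum (by linarith))
  · have hb2 : k2 p = false := by
      cases hb : k2 p
      · rfl
      · exact absurd (hb1.trans hb.symm) hp
    rw [Up_eq b n H F j k1 k2 p hne h1 h2 hb1 hb2 hothers]
    exact key (F k1) (F k2) hF1 hF2 hsum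
end
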